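/- Let L be a language over a finite alphabet Σ accepted by a deterministic automaton A = (Q, q₀, Σ, δ, F) (the set of states Q may be infinite). If there exist a state q that is accessible (q = δ(q₀, x) for some word x) and coaccessible (δ(q, y) ∈ F for some word y) and words u, v with δ(q, u) = q, δ(q, v) = q and uv ≠ vu (two distinct cycles based at q), then adh(L) is uncountable and L is exponential. -/

import Mathlib

/-!
The words `uv` and `vu` are distinct loops at `q` of the same length, so they form a uniquely
decodable code. Reading `x`, then any sequence of these two loops, then `y` leads into `F`; hence
`L` contains `2 ^ m` distinct words of length `|x| + |y| + m |uv|` for every `m`, i.e. it grows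
at rate at least `2 ^ (1 / |uv|)`. Likewise the infinite words `x c₀ c₁ c₂ ⋯` with `cᵢ ∈ {uv, vu}`
are pairwise distinct, lie in the adherence, and are indexed by `ℕ → Bool`.
-/

/-- The prefix of length `ℓ` of an infinite word `w : ℕ → A`. -/
def prefixOf {A : Type*} (w : ℕ → A) (ℓ : ℕ) : List A := List.ofFn (fun i : Fin ℓ => w i)

/-- The set of prefixes of words of a language `L`. -/
def pref {A : Type*} (L : Set (List A)) : Set (List A) := {u | ∃ v ∈ L, u <+: v}

/-- The adherence of a language. -/
def adh {A : Type*} (L : Set (List A)) : Set (ℕ → A) :=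
  {w | ∀ ℓ : ℕ, prefixOf w ℓ ∈ pref L}

/-- Transition function of a deterministic automaton extended to words. -/
def deltaStar {Q A : Type*} (δ : Q → A → Q) (q : Q) (w : List A) : Q := w.foldl δ q

/-- A language `M` is exponential if the number of its words of length `n`
is at least `c·θⁿ` for some `θ > 1`, `c > 0` and infinitely many `n`. -/
def Exponential {A : Type*} (M : Set (List A)) : Prop :=
  ∃ θ : ℝ, 1 < θ ∧ ∃ c : ℝ, 0 < c ∧
    ∀ N : ℕ, ∃ n : ℕ, N ≤ n ∧ c * θ ^ n ≤ ({w ∈ M | w.length = n}.ncard : ℝ)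

open Function InformationTheory

section Automaton

variable {Q Γ : Type*} {δ : Q → Γ → Q}

theorem deltaStar_append (q : Q) (u v : List Γ) :
    deltaStar δ q (u ++ v) = deltaStar δ (deltaStar δ q u) v :=
  List.foldl_append

theorem deltaStar_flatMap_eq_self {α : Type*} {W : α → List Γ} {q : Q}
    (hW : ∀ a, deltaStar δ q (W a) = q) (l : List α) : deltaStar δ q (l.flatMap W) = q := by
  induction l with
  | nil => rfl
  | cons a l ih => rw [List.flatMap_cons, deltaStar_append, hW, ih]

end Automaton

theorem uniquelyDecodable_of_length_eq {α : Type*} {S : Set (List α)} {k : ℕ} (hk : 0 < k)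
    (hS : ∀ w ∈ S, w.length = k) : UniquelyDecodable S := by
  intro L₁
  induction L₁ with
  | nil =>
    rintro (_ | ⟨w, L₂⟩) - h₂ h
    · rfl
    · have := hS w (h₂ w List.mem_cons_self)
      simp_all
  | cons w L₁ ih =>
    rintro (_ | ⟨w', L₂⟩) h₁ h₂ h
    · have := hS w (h₁ w List.mem_cons_self)
      simp_all
    · obtain ⟨rfl, htail⟩ := List.append_inj h (by
        rw [hS w (h₁ w List.mem_cons_self), hS w' (h₂ w' List.mem_cons_self)])
      rw [ih L₂ (fun x hx => h₁ x (List.mem_cons_of_mem _ hx))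
        (fun x hx => h₂ x (List.mem_cons_of_mem _ hx)) htail]

theorem length_flatMap_of_length_eq {α Γ : Type*} {W : α → List Γ} {k : ℕ}
    (hlen : ∀ a, (W a).length = k) (l : List α) : (l.flatMap W).length = l.length * k := by
  induction l with
  | nil => simp
  | cons a l ih => rw [List.flatMap_cons, List.length_append, ih, hlen, List.length_cons]; ring

theorem flatMap_injective_of_length_eq {α Γ : Type*} {W : α → List Γ} {k : ℕ} (hk : 0 < k)
    (hW : Injective W) (hlen : ∀ a, (W a).length = k) :
    Injective fun l : List α => l.flatMap W := by
  intro l₁ l₂ h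
  have hdec : UniquelyDecodable (Set.range W) :=
    uniquelyDecodable_of_length_eq hk (by rintro _ ⟨a, rfl⟩; exact hlen a)
  refine List.map_injective_iff.mpr hW (hdec _ _ ?_ ?_ ?_)
  · simp
  · simp
  · simpa [List.flatMap_def] using h

theorem prefixOf_eq_take {A : Type*} (w : Stream' A) (ℓ : ℕ) : prefixOf w ℓ = w.take ℓ := by
  induction ℓ with
  | zero => rfl
  | succ n ih =>
    unfold prefixOf at *
    rw [List.ofFn_succ_last, Stream'.take_succ', ← ih]
    rfl

theorem mem_adh_of_forall_exists_take_mem_pref {A : Type*} {L : Set (List A)} {w : Stream' A}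
    (h : ∀ N, ∃ ℓ ≥ N, w.take ℓ ∈ pref L) : w ∈ adh L := by
  intro N
  obtain ⟨ℓ, hℓ, v, hv, hpre⟩ := h N
  exact ⟨v, hv, prefixOf_eq_take w N ▸ (Stream'.take_prefix_take_left _ _ _ hℓ).trans hpre⟩

section BlockStream

variable {α Γ : Type*} [Inhabited Γ] {W : α → List Γ} {k : ℕ}

/-- `W (s 0) ++ W (s 1) ++ ⋯`, provided every block `W a` has length `k`. -/
def blockStream (W : α → List Γ) (k : ℕ) (s : ℕ → α) : Stream' Γ :=
  fun n => (W (s (n / k))).getI (n % k)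

theorem take_blockStream (hlen : ∀ a, (W a).length = k) (s : ℕ → α) (m : ℕ) :
    (blockStream W k s).take (m * k) = (List.ofFn fun i : Fin m => s i).flatMap W := by
  induction m with
  | zero => simp
  | succ m ih =>
    have hblock : ((blockStream W k s).drop (m * k)).take k = W (s m) := by
      refine List.ext_getElem (by rw [Stream'.length_take, hlen]) fun i hi _ => ?_
      rw [Stream'.length_take] at hi
      rw [Stream'.take_get, Stream'.get_drop]
      have hdiv : (m * k + i) / k = m := by
        rw [Nat.add_comm, Nat.add_mul_div_right _ _ (by omega), Nat.div_eq_of_lt hi, Nat.zero_add]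
      have hmod : (m * k + i) % k = i := by
        rw [Nat.add_comm, Nat.add_mul_mod_self_right, Nat.mod_eq_of_lt hi]
      simp only [Stream'.get, blockStream, hdiv, hmod]
      exact List.getI_eq_getElem _ (by rw [hlen]; exact hi)
    rw [Nat.succ_mul, Stream'.take_add, ih, hblock, List.ofFn_succ_last, List.flatMap_append]
    simp

theorem blockStream_injective (hk : 0 < k) (hW : Injective W) (hlen : ∀ a, (W a).length = k) :
    Injective (blockStream W k) := by
  intro s s' h
  funext m
  have hblocks := take_blockStream hlen s (m + 1)
  rw [h, take_blockStream hlen s' (m + 1)] at hblocks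
  have := congrFun (List.ofFn_injective (flatMap_injective_of_length_eq hk hW hlen hblocks))
    (Fin.last m)
  exact this.symm

end BlockStream

theorem uncountable_nat_to_bool : Uncountable (ℕ → Bool) := by
  rw [← Cardinal.aleph0_lt_mk_iff]
  simpa using Cardinal.aleph0_lt_continuum

theorem exponential_of_two_pow_le_ncard {A : Type*} {M : Set (List A)} {a k : ℕ} (hk : 0 < k)
    (h : ∀ m, 2 ^ m ≤ {w ∈ M | w.length = a + m * k}.ncard) : Exponential M := by
  set θ : ℝ := 2 ^ ((k : ℝ)⁻¹)
  have hθk : θ ^ k = 2 := Real.rpow_inv_natCast_pow (by norm_num) hk.ne'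
  have hθ : 1 < θ := Real.one_lt_rpow (by norm_num) (by positivity)
  refine ⟨θ, hθ, (θ ^ a)⁻¹, by positivity, fun N => ⟨a + N * k, by nlinarith, ?_⟩⟩
  calc (θ ^ a)⁻¹ * θ ^ (a + N * k) = 2 ^ N := by
        rw [pow_add, inv_mul_cancel_left₀ (by positivity), pow_mul', hθk]
    _ ≤ _ := by exact_mod_cast h N

theorem two_pow_le_ncard_of_injective {A : Type*} [Finite A] {M : Set (List A)} {m n : ℕ}
    {f : (Fin m → Bool) → List A} (hf : Injective f) (hfM : ∀ s, f s ∈ M)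
    (hlen : ∀ s, (f s).length = n) : 2 ^ m ≤ {w ∈ M | w.length = n}.ncard :=
  calc 2 ^ m = (Set.univ : Set (Fin m → Bool)).ncard := by simp [Set.ncard_univ]
    _ ≤ _ := Set.ncard_le_ncard_of_injOn f (fun s _ => by exact ⟨hfM s, hlen s⟩) hf.injOn
      ((List.finite_length_eq A n).subset fun _ hw => hw.2)

section BinaryCode

variable {Γ : Type*} {L : Set (List Γ)} {W : Bool → List Γ} {k : ℕ}

theorem not_countable_adh_of_flatMap_mem (hk : 0 < k) (hW : Injective W)
    (hlen : ∀ b, (W b).length = k) (x y : List Γ)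
    (hL : ∀ l : List Bool, x ++ l.flatMap W ++ y ∈ L) : ¬ (adh L).Countable := by
  have : Inhabited Γ := ⟨(W true)[0]'(by rw [hlen]; exact hk)⟩
  have hmem (s : ℕ → Bool) : x ++ₛ blockStream W k s ∈ adh L := by
    refine mem_adh_of_forall_exists_take_mem_pref fun N => ⟨x.length + N * k, ?_, ?_⟩
    · nlinarith
    · rw [← Stream'.append_take, take_blockStream hlen]
      exact ⟨_, hL _, List.prefix_append _ _⟩
  have hinj : Injective fun s => x ++ₛ blockStream W k s :=
    fun s s' h => blockStream_injective hk hW hlen (Stream'.append_right_injective _ _ _ h)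
  intro hcount
  have hpre := hcount.preimage hinj
  rw [show _ ⁻¹' adh L = Set.univ from Set.eq_univ_of_forall hmem] at hpre
  exact Set.not_countable_univ_iff.mpr uncountable_nat_to_bool hpre

theorem exponential_of_flatMap_mem [Finite Γ] (hk : 0 < k) (hW : Injective W)
    (hlen : ∀ b, (W b).length = k) (x y : List Γ)
    (hL : ∀ l : List Bool, x ++ l.flatMap W ++ y ∈ L) : Exponential L := by
  refine exponential_of_two_pow_le_ncard (a := x.length + y.length) hk fun m =>
    two_pow_le_ncard_of_injective (f := fun s => x ++ (List.ofFn s).flatMap W ++ y)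
      (fun s s' h => List.ofFn_injective <| flatMap_injective_of_length_eq hk hW hlen <|
        List.append_cancel_left (List.append_cancel_right h))
      (fun s => hL _) fun s => ?_
  rw [List.length_append, List.length_append, length_flatMap_of_length_eq hlen, List.length_ofFn]
  ring

end BinaryCode

theorem stmt_6 {Γ : Type*} [Fintype Γ] (L : Set (List Γ))
    {Q : Type*} (q0 : Q) (δ : Q → Γ → Q) (F : Set Q)
    (hL : L = {w | deltaStar δ q0 w ∈ F})
    (hcyc : ∃ q : Q,
      (∃ x : List Γ, deltaStar δ q0 x = q) ∧
      (∃ y : List Γ, deltaStar δ q y ∈ F) ∧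
      ∃ u v : List Γ, deltaStar δ q u = q ∧ deltaStar δ q v = q ∧ u ++ v ≠ v ++ u) :
    ¬ (adh L).Countable ∧ Exponential L := by
  obtain ⟨q, ⟨x, hx⟩, ⟨y, hy⟩, u, v, hu, hv, huv⟩ := hcyc
  set W : Bool → List Γ := fun b => if b then u ++ v else v ++ u
  have hlen : ∀ b, (W b).length = (u ++ v).length := by
    rintro (_ | _) <;> simp [W, Nat.add_comm]
  have hW : Injective W := by
    rintro (_ | _) (_ | _) h
    exacts [rfl, absurd h.symm (by simpa [W] using huv), absurd h (by simpa [W] using huv), rfl]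
  have hk : 0 < (u ++ v).length := List.length_pos_iff.mpr fun h => huv (by simp_all)
  have hloop : ∀ b, deltaStar δ q (W b) = q := by
    rintro (_ | _) <;> simp [W, deltaStar_append, hu, hv]
  have hcode : ∀ l : List Bool, x ++ l.flatMap W ++ y ∈ L := by
    intro l
    rw [hL, Set.mem_ofPred_eq, deltaStar_append, deltaStar_append, hx,
      deltaStar_flatMap_eq_self hloop]
    exact hy
  exact ⟨not_countable_adh_of_flatMap_mem hk hW hlen x y hcode,
    exponential_of_flatMap_mem hk hW hlen x y hcode⟩
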